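/- arXiv:0706.2391 — 2 statements merged into one kernel-verified Lean document; each statement's English description precedes it below -/
import Mathlib

section
/- There exist ξ, η in the Gaussian chaos space such that the Wick product series of ξ ⋄ η diverges in L²: with ξ a standard Gaussian and η = Σ_{n=1}^∞ H_n(ξ)/(n√(n!)) (which is in L² since Σ 1/n² < ∞), the formal Wick product ξ ⋄ η = Σ_{n=1}^∞ (√(n+1)/n) ξ_{(n+1)ε₁} has Σ_{n=1}^∞ (n+1)/n² = ∞, hence does not converge in L²(Ω). -/
open scoped RealInnerProductSpace

/-- With `ξ` a standard Gaussian, `η = Σ_{n≥1} H_n(ξ)/(n√(n!))`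
is in `L²` (since `Σ 1/n² < ∞`), but the formal Wick product
`ξ ⋄ η = Σ_{n≥1} (√(n+1)/n) ξ_{(n+1)ε₁}` has `Σ (n+1)/n² = ∞` and hence does not
converge in `L²`: for any orthonormal system `(e_n)` in a Hilbert space (such as
`ξ_{(n+1)ε₁}` in `L²(Ω)`), the series `Σ (√(n+1)/n) e_n` has no sum.
(Indexing: `n ≥ 1` is written as `n + 1` with `n : ℕ`.) -/
theorem wick_product_may_diverge :
    (Summable fun n : ℕ => (1 : ℝ) / ((n : ℝ) + 1) ^ 2) ∧
    (¬ Summable fun n : ℕ => (Real.sqrt ((n : ℝ) + 2) / ((n : ℝ) + 1)) ^ 2) ∧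
    (∀ (E : Type) [NormedAddCommGroup E] [InnerProductSpace ℝ E] [CompleteSpace E]
      (e : ℕ → E), Orthonormal ℝ e →
      ¬ ∃ x : E, HasSum (fun n : ℕ => (Real.sqrt ((n : ℝ) + 2) / ((n : ℝ) + 1)) • e n) x) := by
  set a : ℕ → ℝ := fun n => Real.sqrt ((n : ℝ) + 2) / ((n : ℝ) + 1) with ha
  have hsq : ∀ n : ℕ, (a n) ^ 2 = ((n : ℝ) + 2) / ((n : ℝ) + 1) ^ 2 := by
    intro n
    have h2 : (0 : ℝ) ≤ (n : ℝ) + 2 := by positivity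
    simp [ha, div_pow, Real.sq_sqrt h2]
  have hns : ¬ Summable fun n : ℕ => (a n) ^ 2 := by
    intro hs
    have : Summable fun n : ℕ => (1 : ℝ) / ((n : ℝ) + 1) := by
      refine hs.of_nonneg_of_le (fun n => by positivity) (fun n => ?_)
      rw [hsq]
      rw [div_le_div_iff₀ (by positivity) (by positivity)]
      ring_nf
      nlinarith [Nat.cast_nonneg (α := ℝ) n]
    have h2 : Summable (fun n : ℕ => 1 / (n : ℝ)) := by
      rw [← summable_nat_add_iff 1]
      exact this.congr (by intro n; push_cast; ring)
    exact Real.not_summable_one_div_natCast h2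
  refine ⟨?_, hns, ?_⟩
  · have := Real.summable_one_div_nat_pow.mpr (show 1 < 2 by norm_num)
    have h := (summable_nat_add_iff 1).mpr this
    exact h.congr (by intro n; push_cast; ring_nf)
  · intro E _ _ _ e he ⟨x, hx⟩
    apply hns
    have hBessel := he.inner_products_summable x
    have hinner : ∀ m : ℕ, (inner ℝ (e m) x : ℝ) = a m := by
      intro m
      have h1 : HasSum (fun n : ℕ => (inner ℝ (e m) (a n • e n) : ℝ)) (inner ℝ (e m) x : ℝ) :=
        (innerSL ℝ (e m)).hasSum hx
      have h2 : HasSum (fun n : ℕ => (inner ℝ (e m) (a n • e n) : ℝ)) (a m) := by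
        have : (fun n : ℕ => (inner ℝ (e m) (a n • e n) : ℝ)) =
            fun n => if n = m then a m else 0 := by
          funext n
          rw [real_inner_smul_right]
          rcases eq_or_ne n m with rfl | hn
          · simp [he.inner_left_right_finset, real_inner_self_eq_norm_sq, he.1 n]
          · simp [he.2 (Ne.symm hn), hn]
        rw [this]
        exact hasSum_ite_eq m (a m)
      exact h1.unique h2
    refine hBessel.congr fun n => ?_
    rw [hinner n]
    simp [Real.norm_eq_abs, sq_abs]
end

section
/- Consider the system of equations y_α : [0,T] → ℝ, indexed by finitely supported multi-indices α, given by y_α(t) = Σ_{k≥1} √(α_k) ∫₀^t y_{α−ε_k}(s) m̃_k(s) ds for |α| ≥ 1 and y_α(t) = 0 for |α| = 0, where each m̃_k ∈ L²((0,T)) and each y_α ∈ L²((0,T)). Then y_α(t) = 0 for all α and all t ∈ [0,T]. -/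
open MeasureTheory intervalIntegral Finsupp

/-- The homogeneous chaos hierarchy
`y_α(t) = Σ_k √(α_k) ∫₀^t y_{α−ε_k}(s) m̃_k(s) ds` (for `|α| ≥ 1`), with
`y_α = 0` for `|α| = 0`, has only the zero solution: `y_α(t) = 0` for all `α`
and all `t ∈ [0,T]`. -/
theorem chaos_hierarchy_uniqueness
    (T : ℝ) (hT : 0 < T) (m : ℕ → ℝ → ℝ)
    (hm_meas : ∀ k, Measurable (m k))
    (hm_L2 : ∀ k, MemLp (m k) 2 (MeasureTheory.volume.restrict (Set.Ioo 0 T)))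
    (y : (ℕ →₀ ℕ) → ℝ → ℝ)
    (hy_L2 : ∀ α, MemLp (y α) 2 (MeasureTheory.volume.restrict (Set.Ioo 0 T)))
    (hy_zero : ∀ t : ℝ, y 0 t = 0)
    (hy_rec : ∀ α : ℕ →₀ ℕ, α ≠ 0 → ∀ t ∈ Set.Icc (0:ℝ) T,
      y α t = ∑ k ∈ α.support, Real.sqrt (α k) *
        ∫ s in (0:ℝ)..t, y (α - single k 1) s * m k s) :
    ∀ α : ℕ →₀ ℕ, ∀ t ∈ Set.Icc (0:ℝ) T, y α t = 0 := by
  have deg_lt : ∀ (α : ℕ →₀ ℕ) k, k ∈ α.support →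
      ((α - single k 1).sum fun _ n => n) < α.sum fun _ n => n := by
    intro α k hk
    have h1 : single k 1 ≤ α :=
      Finsupp.single_le_iff.mpr (Nat.one_le_iff_ne_zero.mpr (Finsupp.mem_support_iff.mp hk))
    have h2 : (α - single k 1) + single k 1 = α := tsub_add_cancel_of_le h1
    have h3 := congrArg (fun β : ℕ →₀ ℕ => β.sum fun _ n => n) h2
    rw [Finsupp.sum_add_index' (fun _ => rfl) (fun _ _ _ => rfl),
      Finsupp.sum_single_index rfl] at h3
    omega
  suffices H : ∀ n : ℕ, ∀ α : ℕ →₀ ℕ, (α.sum fun _ v => v) = n →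
      ∀ t ∈ Set.Icc (0:ℝ) T, y α t = 0 by
    intro α; exact H _ α rfl
  intro n
  induction n using Nat.strong_induction_on with
  | _ n ih =>
    intro α hα t ht
    by_cases h0 : α = 0
    · subst h0; exact hy_zero t
    · rw [hy_rec α h0 t ht]
      apply Finset.sum_eq_zero
      intro k hk
      have hz : Set.EqOn (fun s => y (α - single k 1) s * m k s) (fun _ => (0:ℝ))
          (Set.uIcc (0:ℝ) t) := by
        intro s hs
        have hsub : Set.uIcc (0:ℝ) t ⊆ Set.Icc (0:ℝ) T := by
          rw [Set.uIcc_of_le ht.1]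
          exact Set.Icc_subset_Icc le_rfl ht.2
        have : y (α - single k 1) s = 0 :=
          ih _ (hα ▸ deg_lt α k hk) _ rfl s (hsub hs)
        simp [this]
      rw [intervalIntegral.integral_congr hz]
      simp
end
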